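/- arXiv:1404.7286 — 3 statements merged into one kernel-verified Lean document; each statement's English description precedes it below -/
import Mathlib

section
/- If G is a connected graph that is not regular, then its average degree is strictly less than its spectral radius, which is strictly less than its maximum degree: α(G) < ρ(G) < Δ(G). -/
open SimpleGraph Finset Matrix
open scoped Classical

/-- Spectral radius of a finite simple graph: the supremum of eigenvalues of its
adjacency matrix. -/
noncomputable def specRad {V : Type*} [Fintype V] (G : SimpleGraph V) : ℝ :=
  sSup {μ : ℝ | ∃ x : V → ℝ, x ≠ 0 ∧
    (Matrix.of fun i j => if G.Adj i j then (1 : ℝ) else 0) *ᵥ x = μ • x}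

/-- The square of a graph: join vertices at distance 1 or 2. -/
def gsq {V : Type*} (G : SimpleGraph V) : SimpleGraph V :=
  SimpleGraph.fromRel (fun a b => G.dist a b = 1 ∨ G.dist a b = 2)

/-- Coalescence `H₁(v) ∘ H₂(w)`: identify the vertex `v` of `H₁` with the vertex `w`
of `H₂` (the identified vertex is `Sum.inl v`). -/
def coal {V₁ V₂ : Type*} (H₁ : SimpleGraph V₁) (v : V₁) (H₂ : SimpleGraph V₂) (w : V₂) :
    SimpleGraph (V₁ ⊕ {x : V₂ // x ≠ w}) :=
  SimpleGraph.fromRel (fun a b =>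
    match a, b with
    | Sum.inl a, Sum.inl b => H₁.Adj a b
    | Sum.inl a, Sum.inr b => a = v ∧ H₂.Adj w b.1
    | Sum.inr a, Sum.inr b => H₂.Adj a.1 b.1
    | Sum.inr _, Sum.inl _ => False)

/-- The star on `n` vertices with center `0`. -/
def starGraph (n : ℕ) : SimpleGraph (Fin n) :=
  SimpleGraph.fromRel (fun a _ => a.val = 0)

/-- The star on a vertex set `V` centered at `u`. -/
def starAt {V : Type*} (u : V) : SimpleGraph V :=
  SimpleGraph.fromRel (fun a _ => a = u)

/-- A unicyclic graph: connected with exactly as many edges as vertices. -/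
def IsUnicyclic {V : Type*} [Fintype V] (G : SimpleGraph V) : Prop :=
  G.Connected ∧ G.edgeSet.ncard = Fintype.card V

/-- Degree of a vertex. -/
noncomputable def deg {V : Type*} [Fintype V] (G : SimpleGraph V) (v : V) : ℕ :=
  (Finset.univ.filter fun u => G.Adj v u).card

/-- Average degree of a finite graph, as a real number. -/
noncomputable def avgDeg {V : Type*} [Fintype V] (G : SimpleGraph V) : ℝ :=
  (∑ v, (deg G v : ℝ)) / Fintype.card V

/-- Maximum degree of a finite graph. -/
noncomputable def maxDeg {V : Type*} [Fintype V] (G : SimpleGraph V) : ℕ :=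
  Finset.univ.sup fun v => deg G v

/-! The adjacency matrix `A` is symmetric, so its largest eigenvalue `λ` is the spectral radius
and `λ - A` is positive semidefinite. Testing this against the all-ones vector `𝟙` gives
`∑ deg = ⟪𝟙, A 𝟙⟫ ≤ λ n`, with equality only if `A 𝟙 = λ 𝟙`, i.e. `G` is regular.
For the upper bound take a `λ`-eigenvector `x` and a vertex `v` where `|x|` is maximal:
`λ |x v| ≤ ∑_{u ~ v} |x u| ≤ deg v · |x v| ≤ Δ |x v|`, so `Δ ≤ λ` forces `deg v = Δ` and makes
`|x|` maximal at every neighbour of `v` too; by connectedness `G` is then `Δ`-regular. -/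

namespace Matrix

theorem algebraMap_mulVec {n R : Type*} [Fintype n] [DecidableEq n] [CommRing R] (L : R)
    (x : n → R) : algebraMap R (Matrix n n R) L *ᵥ x = L • x := by
  rw [Algebra.algebraMap_eq_smul_one, smul_mulVec, one_mulVec]

namespace IsHermitian

variable {n : Type*} [Fintype n] [DecidableEq n]

open scoped MatrixOrder ComplexOrder in
theorem posSemidef_algebraMap_sub {𝕜 : Type*} [RCLike 𝕜] {A : Matrix n n 𝕜}
    (hA : A.IsHermitian) {L : ℝ} (hL : ∀ i, hA.eigenvalues i ≤ L) :
    (algebraMap ℝ (Matrix n n 𝕜) L - A).PosSemidef := by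
  rw [← nonneg_iff_posSemidef, sub_nonneg]
  refine le_algebraMap_of_spectrum_le (fun μ hμ => ?_) hA.isSelfAdjoint
  obtain ⟨i, rfl⟩ := hA.spectrum_real_eq_range_eigenvalues ▸ hμ
  exact hL i

variable {A : Matrix n n ℝ} (hA : A.IsHermitian)

section UpperBound

variable {L : ℝ} (hL : ∀ i, hA.eigenvalues i ≤ L)
include hL

theorem dotProduct_mulVec_le (x : n → ℝ) : x ⬝ᵥ (A *ᵥ x) ≤ L * (x ⬝ᵥ x) := by
  have h := (hA.posSemidef_algebraMap_sub hL).dotProduct_mulVec_nonneg x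
  rw [sub_mulVec, algebraMap_mulVec, star_trivial, dotProduct_sub, dotProduct_smul,
    smul_eq_mul] at h
  linarith

theorem mulVec_eq_smul_of_dotProduct_mulVec_eq {x : n → ℝ}
    (hx : x ⬝ᵥ (A *ᵥ x) = L * (x ⬝ᵥ x)) : A *ᵥ x = L • x := by
  have h := (hA.posSemidef_algebraMap_sub hL).dotProduct_mulVec_zero_iff x
  rw [sub_mulVec, algebraMap_mulVec, star_trivial, dotProduct_sub, dotProduct_smul, smul_eq_mul,
    hx, sub_self, sub_eq_zero] at h
  exact (h.mp rfl).symm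

theorem le_of_mulVec_eq_smul {μ : ℝ} {x : n → ℝ} (hx : x ≠ 0) (hμ : A *ᵥ x = μ • x) : μ ≤ L := by
  have h := hA.dotProduct_mulVec_le hL x
  rw [hμ, dotProduct_smul, smul_eq_mul] at h
  exact le_of_mul_le_mul_right h (by simpa using dotProduct_self_star_pos_iff.mpr hx)

end UpperBound

theorem isGreatest_sup'_eigenvalues [Nonempty n] :
    IsGreatest {μ : ℝ | ∃ x : n → ℝ, x ≠ 0 ∧ A *ᵥ x = μ • x}
      (Finset.univ.sup' Finset.univ_nonempty hA.eigenvalues) := by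
  obtain ⟨i, -, hi⟩ := Finset.exists_mem_eq_sup' Finset.univ_nonempty hA.eigenvalues
  refine ⟨⟨hA.eigenvectorBasis i, ?_, ?_⟩, fun μ ⟨x, hx, hμ⟩ => ?_⟩
  · exact (WithLp.ofLp_eq_zero 2).ne.2 (hA.eigenvectorBasis.orthonormal.ne_zero i)
  · rw [hi, hA.mulVec_eigenvectorBasis]
  · exact hA.le_of_mulVec_eq_smul (fun j => Finset.le_sup' _ (Finset.mem_univ j)) hx hμ

end IsHermitian

end Matrix

namespace SimpleGraph

theorem Preconnected.forall_of_adj_imp {V : Type*} {G : SimpleGraph V} {P : V → Prop}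
    (hG : G.Preconnected) (hP : ∀ u v, G.Adj u v → P u → P v) {u : V} (hu : P u) (v : V) :
    P v := by
  obtain ⟨w⟩ := hG u v
  induction w with
  | nil => exact hu
  | cons h _ ih => exact ih (hP _ _ h hu)

variable {V : Type*} [Fintype V] {G : SimpleGraph V}

theorem deg_eq_degree (v : V) : deg G v = G.degree v := by
  rw [← card_neighborFinset_eq_degree, neighborFinset_eq_filter]
  rfl

theorem specRad_eq_sSup : specRad G =
    sSup {μ : ℝ | ∃ x : V → ℝ, x ≠ 0 ∧ G.adjMatrix ℝ *ᵥ x = μ • x} := rfl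

theorem adjMatrix_mulVec_one : G.adjMatrix ℝ *ᵥ (fun _ => 1) = fun v => (deg G v : ℝ) := by
  ext v
  simp [deg_eq_degree]

theorem avgDeg_lt_of_eigenvalues_le [Nonempty V] (hreg : ¬ ∃ d, ∀ v, deg G v = d) {L : ℝ}
    (hL : ∀ i, (G.isHermitian_adjMatrix ℝ).eigenvalues i ≤ L) : avgDeg G < L := by
  set one : V → ℝ := fun _ => 1
  have hsum : one ⬝ᵥ (G.adjMatrix ℝ *ᵥ one) = ∑ v, (deg G v : ℝ) := by
    rw [adjMatrix_mulVec_one]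
    simp [one, dotProduct]
  have hcard : one ⬝ᵥ one = Fintype.card V := by simp [one, dotProduct]
  rw [avgDeg, div_lt_iff₀ (by positivity), ← hsum, ← hcard]
  refine ((G.isHermitian_adjMatrix ℝ).dotProduct_mulVec_le hL one).lt_of_ne fun heq => hreg ?_
  have hconst := (G.isHermitian_adjMatrix ℝ).mulVec_eq_smul_of_dotProduct_mulVec_eq hL heq
  rw [adjMatrix_mulVec_one] at hconst
  obtain ⟨v₀⟩ := ‹Nonempty V›
  refine ⟨deg G v₀, fun v => ?_⟩
  exact_mod_cast (congrFun hconst v).trans (congrFun hconst v₀).symm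

theorem deg_eq_maxDeg_and_abs_eq_of_forall_abs_le {x : V → ℝ} {μ : ℝ}
    (hx : G.adjMatrix ℝ *ᵥ x = μ • x) (hμ : (maxDeg G : ℝ) ≤ μ) {v : V}
    (hv : ∀ u, |x u| ≤ |x v|) (hxv : x v ≠ 0) :
    deg G v = maxDeg G ∧ ∀ u, G.Adj v u → |x u| = |x v| := by
  have hM : 0 < |x v| := abs_pos.mpr hxv
  have hμ0 : 0 ≤ μ := (Nat.cast_nonneg _).trans hμ
  have hdeg : (deg G v : ℝ) ≤ maxDeg G := by exact_mod_cast Finset.le_sup (Finset.mem_univ v)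
  have hupper : ∑ u ∈ G.neighborFinset v, |x u| ≤ ∑ _u ∈ G.neighborFinset v, |x v| :=
    Finset.sum_le_sum fun u _ => hv u
  have hlower : μ * |x v| ≤ ∑ u ∈ G.neighborFinset v, |x u| := by
    have hxv := congrFun hx v
    rw [adjMatrix_mulVec_apply, Pi.smul_apply, smul_eq_mul] at hxv
    calc μ * |x v| = |∑ u ∈ G.neighborFinset v, x u| := by rw [hxv, abs_mul, abs_of_nonneg hμ0]
      _ ≤ _ := Finset.abs_sum_le_sum_abs _ _
  have hconst : ∑ _u ∈ G.neighborFinset v, |x v| = deg G v * |x v| := by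
    rw [Finset.sum_const, nsmul_eq_mul, card_neighborFinset_eq_degree, deg_eq_degree]
  have hmaxDeg_le : (maxDeg G : ℝ) * |x v| ≤ deg G v * |x v| :=
    (mul_le_mul_of_nonneg_right hμ hM.le).trans (hlower.trans (hconst ▸ hupper))
  have hdeg_eq : (deg G v : ℝ) = maxDeg G := hdeg.antisymm (le_of_mul_le_mul_right hmaxDeg_le hM)
  refine ⟨by exact_mod_cast hdeg_eq, fun u hu => ?_⟩
  have hsum_eq : ∑ u ∈ G.neighborFinset v, |x u| = ∑ _u ∈ G.neighborFinset v, |x v| := by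
    refine hupper.antisymm ?_
    rw [hconst, hdeg_eq]
    exact (mul_le_mul_of_nonneg_right hμ hM.le).trans hlower
  exact (Finset.sum_eq_sum_iff_of_le fun u _ => hv u).mp hsum_eq u
    ((mem_neighborFinset _ _ _).mpr hu)

theorem deg_eq_maxDeg_of_maxDeg_le_eigenvalue (hG : G.Preconnected) {x : V → ℝ} {μ : ℝ}
    (hx0 : x ≠ 0) (hx : G.adjMatrix ℝ *ᵥ x = μ • x) (hμ : (maxDeg G : ℝ) ≤ μ) (v : V) :
    deg G v = maxDeg G := by
  obtain ⟨w, hw⟩ := Function.ne_iff.mp hx0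
  have : Nonempty V := ⟨w⟩
  obtain ⟨v₀, hv₀⟩ := Finite.exists_max fun u => |x u|
  have hne : ∀ u, (∀ w, |x w| ≤ |x u|) → x u ≠ 0 := fun u hu hxu =>
    hw (abs_nonpos_iff.mp (by simpa [hxu] using hu w))
  have hclosed : ∀ u u', G.Adj u u' → (∀ w, |x w| ≤ |x u|) → ∀ w, |x w| ≤ |x u'| :=
    fun u u' hadj hu w => by
      rw [(deg_eq_maxDeg_and_abs_eq_of_forall_abs_le hx hμ hu (hne u hu)).2 u' hadj]
      exact hu w
  have hv := hG.forall_of_adj_imp hclosed hv₀ v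
  exact (deg_eq_maxDeg_and_abs_eq_of_forall_abs_le hx hμ hv (hne v hv)).1

end SimpleGraph

/-- A connected non-regular graph satisfies
`α(G) < ρ(G) < Δ(G)`. -/
theorem avgDeg_lt_specRad_lt_maxDeg {V : Type*} [Fintype V] (G : SimpleGraph V)
    (hG : G.Connected) (hreg : ¬ ∃ d, ∀ v, deg G v = d) :
    avgDeg G < specRad G ∧ specRad G < (maxDeg G : ℝ) := by
  have := hG.nonempty
  have hmax := (G.isHermitian_adjMatrix ℝ).isGreatest_sup'_eigenvalues
  obtain ⟨x, hx0, hx⟩ := hmax.1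
  rw [specRad_eq_sSup, hmax.csSup_eq]
  refine ⟨avgDeg_lt_of_eigenvalues_le hreg fun i => Finset.le_sup' _ (Finset.mem_univ i), ?_⟩
  by_contra! hΔ
  exact hreg ⟨maxDeg G, deg_eq_maxDeg_of_maxDeg_le_eigenvalue hG.preconnected hx0 hx hΔ⟩
end

section
/- For every unicyclic graph U on n ≥ 3 vertices, ρ(U²) ≤ n−1, with equality if and only if the diameter of U is at most 2. -/
open SimpleGraph Finset Matrix
open scoped Classical

/-! At a vertex `v` where an eigenvector `x` of the adjacency matrix has maximal absolute value,
`|μ| |x v| ≤ ∑_{u ~ v} |x u| ≤ deg v · |x v|`, so every eigenvalue is at most `deg v ≤ N - 1`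
(`N` the number of vertices). If `μ = N - 1` the chain is tight: `v` is adjacent to everything
and its neighbours again maximise `|x|`, so the graph is complete; conversely the all-ones vector
realises `N - 1` for `K_N`. Finally, for connected `U` the square `U²` is complete exactly when
all distances are at most `2`, i.e. when `diam U ≤ 2`. -/

lemma Matrix.setOf_exists_mulVec_eq_smul_eq_spectrum {n K : Type*} [Fintype n] [DecidableEq n]
    [Field K] (A : Matrix n n K) : {μ : K | ∃ x, x ≠ 0 ∧ A *ᵥ x = μ • x} = spectrum K A := by
  ext μ
  rw [← Matrix.spectrum_toLin', ← Module.End.hasEigenvalue_iff_mem_spectrum]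
  constructor
  · rintro ⟨x, hx0, hx⟩
    exact Module.End.hasEigenvalue_of_hasEigenvector
      ⟨Module.End.mem_eigenspace_iff.mpr (by rwa [Matrix.toLin'_apply]), hx0⟩
  · intro h
    obtain ⟨x, hx, hx0⟩ := h.exists_hasEigenvector
    exact ⟨x, hx0, by rwa [Module.End.mem_eigenspace_iff, Matrix.toLin'_apply] at hx⟩

lemma exists_max_abs_pos {V : Type*} [Finite V] {x : V → ℝ} (hx : x ≠ 0) :
    ∃ v, 0 < |x v| ∧ ∀ u, |x u| ≤ |x v| := by
  obtain ⟨w, hw⟩ := Function.ne_iff.mp hx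
  have : Nonempty V := ⟨w⟩
  obtain ⟨v, hv⟩ := Finite.exists_max fun u => |x u|
  exact ⟨v, (abs_pos.mpr hw).trans_le (hv w), hv⟩

namespace SimpleGraph

lemma diam_le_iff_forall_dist_le {V : Type*} [Finite V] {G : SimpleGraph V} (hG : G.Connected)
    {k : ℕ} :
    G.diam ≤ k ↔ ∀ u v, G.dist u v ≤ k := by
  have : Nonempty V := hG.nonempty
  refine ⟨fun h u v => (dist_le_diam (G.connected_iff_ediam_ne_top.mp hG)).trans h, fun h => ?_⟩
  obtain ⟨u, v, huv⟩ := G.exists_dist_eq_diam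
  exact huv ▸ h u v

section

variable {V : Type*} [Fintype V] {G : SimpleGraph V} {x : V → ℝ} {μ : ℝ}

lemma degree_le_card_sub_one (G : SimpleGraph V) [DecidableRel G.Adj] (v : V) :
    (G.degree v : ℝ) ≤ Fintype.card V - 1 := by
  have := G.degree_lt_card_verts v
  rw [le_sub_iff_add_le]
  exact_mod_cast this

lemma abs_mul_le_sum_abs_neighborFinset (hx : G.adjMatrix ℝ *ᵥ x = μ • x) (v : V) :
    |μ| * |x v| ≤ ∑ u ∈ G.neighborFinset v, |x u| := by
  have hv := congrFun hx v
  rw [adjMatrix_mulVec_apply, Pi.smul_apply, smul_eq_mul] at hv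
  rw [← abs_mul, ← hv]
  exact Finset.abs_sum_le_sum_abs _ _

lemma sum_abs_neighborFinset_le {v w : V} (hw : ∀ u, |x u| ≤ |x w|) :
    ∑ u ∈ G.neighborFinset v, |x u| ≤ G.degree v * |x w| := by
  have := Finset.sum_le_card_nsmul _ _ _ fun u (_ : u ∈ G.neighborFinset v) => hw u
  rwa [card_neighborFinset_eq_degree, nsmul_eq_mul] at this

lemma eigenvalue_le_card_sub_one (hx0 : x ≠ 0) (hx : G.adjMatrix ℝ *ᵥ x = μ • x) :
    μ ≤ Fintype.card V - 1 := by
  obtain ⟨v, hpos, hmax⟩ := exists_max_abs_pos hx0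
  have : |μ| * |x v| ≤ (Fintype.card V - 1) * |x v| :=
    calc |μ| * |x v| ≤ ∑ u ∈ G.neighborFinset v, |x u| := abs_mul_le_sum_abs_neighborFinset hx v
      _ ≤ G.degree v * |x v| := sum_abs_neighborFinset_le hmax
      _ ≤ (Fintype.card V - 1) * |x v| := by gcongr; exact G.degree_le_card_sub_one v
  exact (le_abs_self μ).trans (le_of_mul_le_mul_right this hpos)

lemma eq_top_of_eigenvalue_eq_card_sub_one (hx0 : x ≠ 0)
    (hx : G.adjMatrix ℝ *ᵥ x = ((Fintype.card V : ℝ) - 1) • x) : G = ⊤ := by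
  obtain ⟨w, hpos, hmax⟩ := exists_max_abs_pos hx0
  have tight : ∀ v, |x v| = |x w| →
      G.IsUniversal v ∧ ∀ u ∈ G.neighborFinset v, |x u| = |x w| := by
    intro v hv
    have hlow := abs_mul_le_sum_abs_neighborFinset hx v
    rw [abs_of_nonneg ((Nat.cast_nonneg _).trans (G.degree_le_card_sub_one v)), hv] at hlow
    have hup := sum_abs_neighborFinset_le (G := G) (v := v) hmax
    have hdeg : (Fintype.card V : ℝ) - 1 ≤ G.degree v :=
      le_of_mul_le_mul_right (hlow.trans hup) hpos
    refine ⟨?_, ?_⟩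
    · rw [← degree_eq_card_sub_one]
      have := G.degree_lt_card_verts v
      have : Fintype.card V ≤ G.degree v + 1 := by
        rw [sub_le_iff_le_add] at hdeg
        exact_mod_cast hdeg
      omega
    · refine (Finset.sum_eq_sum_iff_of_le fun u _ => hmax u).mp
        (le_antisymm (by simpa using hup) ?_)
      calc ∑ u ∈ G.neighborFinset v, |x w| = G.degree v * |x w| := by simp
        _ ≤ (Fintype.card V - 1) * |x w| := by gcongr; exact G.degree_le_card_sub_one v
        _ ≤ ∑ u ∈ G.neighborFinset v, |x u| := hlow
  have hw := tight w rfl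
  rw [eq_top_iff_forall_isUniversal]
  intro v
  obtain rfl | hvw := eq_or_ne v w
  · exact hw.1
  · exact (tight v (hw.2 v ((G.mem_neighborFinset _ _).mpr (hw.1 hvw.symm)))).1

end

end SimpleGraph

section

variable {V : Type*} [Fintype V]

lemma specRad_eq_sSup_spectrum (G : SimpleGraph V) :
    specRad G = sSup (spectrum ℝ (G.adjMatrix ℝ)) := by
  rw [← Matrix.setOf_exists_mulVec_eq_smul_eq_spectrum]
  rfl

lemma specRad_le_card_sub_one [Nonempty V] (G : SimpleGraph V) :
    specRad G ≤ Fintype.card V - 1 :=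
  Real.sSup_le (fun _ ⟨_, hx0, hx⟩ => eigenvalue_le_card_sub_one hx0 hx)
    (sub_nonneg.mpr (Nat.one_le_cast.mpr Fintype.card_pos))

lemma specRad_eq_card_sub_one_iff [Nonempty V] (G : SimpleGraph V) :
    specRad G = Fintype.card V - 1 ↔ G = ⊤ := by
  have hfin := (G.adjMatrix ℝ).finite_real_spectrum
  rw [specRad_eq_sSup_spectrum]
  constructor
  · intro h
    -- `sSup ∅ = 0`: the supremum is attained only because a symmetric matrix has a real eigenvalue.
    have hne : (spectrum ℝ (G.adjMatrix ℝ)).Nonempty :=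
      ⟨_, (G.isHermitian_adjMatrix ℝ).eigenvalues_mem_spectrum_real (Classical.arbitrary V)⟩
    have hmem := hne.csSup_mem hfin
    rw [h, ← Matrix.setOf_exists_mulVec_eq_smul_eq_spectrum] at hmem
    obtain ⟨x, hx0, hx⟩ := hmem
    exact eq_top_of_eigenvalue_eq_card_sub_one hx0 hx
  · intro h
    refine le_antisymm ?_ (le_csSup hfin.bddAbove ?_)
    · rw [← specRad_eq_sSup_spectrum]
      exact specRad_le_card_sub_one G
    · rw [← Matrix.setOf_exists_mulVec_eq_smul_eq_spectrum]
      refine ⟨fun _ => 1, one_ne_zero, funext fun v => ?_⟩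
      have := (G.degree_eq_card_sub_one v).mpr (eq_top_iff_forall_isUniversal.mp h v)
      simp [this, Nat.cast_sub Fintype.card_pos]

end

lemma gsq_adj {V : Type*} {G : SimpleGraph V} {u v : V} :
    (gsq G).Adj u v ↔ u ≠ v ∧ (G.dist u v = 1 ∨ G.dist u v = 2) := by
  rw [gsq, fromRel_adj, dist_comm (u := v), or_self]

lemma gsq_eq_top_iff {V : Type*} [Finite V] {G : SimpleGraph V} (hG : G.Connected) :
    gsq G = ⊤ ↔ G.diam ≤ 2 := by
  rw [diam_le_iff_forall_dist_le hG, eq_top_iff_forall_ne_adj]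
  refine forall₂_congr fun u v => ?_
  rw [gsq_adj]
  obtain rfl | huv := eq_or_ne u v
  · simp
  · have := hG.pos_dist_of_ne huv
    simp only [ne_eq, huv, not_false_eq_true, true_and, forall_const]
    omega

/-- For a unicyclic graph `U` on `n ≥ 3` vertices,
`ρ(U²) ≤ n - 1`, with equality iff the diameter of `U` is at most 2. -/
theorem specRad_sq_unicyclic_le {n : ℕ} (hn : 3 ≤ n) (U : SimpleGraph (Fin n))
    (hU : IsUnicyclic U) :
    specRad (gsq U) ≤ (n : ℝ) - 1 ∧
      (specRad (gsq U) = (n : ℝ) - 1 ↔ U.diam ≤ 2) := by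
  have : Nonempty (Fin n) := ⟨⟨0, by omega⟩⟩
  have hle := specRad_le_card_sub_one (gsq U)
  have hiff := specRad_eq_card_sub_one_iff (gsq U)
  rw [Fintype.card_fin] at hle hiff
  exact ⟨hle, hiff.trans (gsq_eq_top_iff hU.1)⟩
end

section
/- If U is a unicyclic graph on n ≥ 6 vertices whose girth g satisfies 5 ≤ g ≤ n−1 (so U is not a cycle), then ρ(U²) > 4. -/
open SimpleGraph Finset Matrix
open scoped Classical

/-!
A shortest cycle `f : ZMod g → V` of `U` has length `g ≥ 5`, so in `U²` each of its vertices
`f i` is adjacent to the four distinct cycle vertices `f (i ± 1)`, `f (i ± 2)`. Since `g < n` and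
`U` is connected, some vertex `u` off the cycle is adjacent to a cycle vertex `f i₀`, and then `u`
is adjacent in `U²` to `f (i₀ - 1)`, `f i₀`, `f (i₀ + 1)`. Hence the subgraph of `U²` induced on
the cycle together with `u` has degree sum at least `4g + 6 > 4 (g + 1)`, and the Rayleigh
quotient of its indicator vector gives `ρ(U²) ≥ (4g + 6) / (g + 1) > 4`.
-/

theorem ZMod.intCast_injOn_of_abs_sub_lt {n : ℕ} {s : Set ℤ}
    (hs : ∀ a ∈ s, ∀ b ∈ s, |a - b| < n) : Set.InjOn (Int.cast : ℤ → ZMod n) s := by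
  intro a ha b hb hab
  rw [ZMod.intCast_eq_intCast_iff_dvd_sub] at hab
  have := Int.eq_zero_of_abs_lt_dvd hab (hs b hb a ha)
  omega

namespace Matrix

variable {ι : Type*} [Fintype ι] [DecidableEq ι]

def eigenvalueSet (A : Matrix ι ι ℝ) : Set ℝ := {μ | ∃ x : ι → ℝ, x ≠ 0 ∧ A *ᵥ x = μ • x}

theorem bddAbove_eigenvalueSet (A : Matrix ι ι ℝ) : BddAbove A.eigenvalueSet := by
  refine (Module.End.finite_hasEigenvalue (toLin' A)).bddAbove.mono ?_
  rintro μ ⟨x, hx, hAx⟩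
  exact Module.End.hasEigenvalue_of_hasEigenvector
    ⟨Module.End.mem_eigenspace_iff.mpr (by simpa using hAx), hx⟩

theorem IsHermitian.rayleigh_le_sSup_eigenvalueSet {A : Matrix ι ι ℝ} (hA : A.IsHermitian)
    {x : ι → ℝ} (hx : x ≠ 0) : (x ⬝ᵥ A *ᵥ x) / (x ⬝ᵥ x) ≤ sSup A.eigenvalueSet := by
  set T := toEuclideanLin A
  have hxE : WithLp.toLp 2 x ≠ 0 := by simpa using hx
  have : Nontrivial (EuclideanSpace ℝ ι) := ⟨⟨_, 0, hxE⟩⟩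
  obtain ⟨y, hy⟩ := (isSymmetric_toEuclideanLin_iff.mpr hA).hasEigenvalue_iSup_of_finiteDimensional
    |>.exists_hasEigenvector
  refine le_trans ?_ (le_csSup (bddAbove_eigenvalueSet A)
    ⟨WithLp.ofLp y, by simpa using hy.2, congrArg WithLp.ofLp hy.apply_eq_smul⟩)
  have hbdd : BddAbove (Set.range fun z : {z : EuclideanSpace ℝ ι // z ≠ 0} =>
      RCLike.re (inner ℝ (T z) (z : EuclideanSpace ℝ ι)) / ‖(z : EuclideanSpace ℝ ι)‖ ^ 2) := by
    refine ⟨‖LinearMap.toContinuousLinearMap T‖, ?_⟩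
    rintro _ ⟨z, rfl⟩
    exact (le_abs_self _).trans ((LinearMap.toContinuousLinearMap T).rayleighQuotient_le_norm z)
  have hnorm : ‖WithLp.toLp 2 x‖ ^ 2 = x ⬝ᵥ x := by
    rw [EuclideanSpace.real_norm_sq_eq]
    simp [dotProduct, sq]
  convert le_ciSup hbdd ⟨_, hxE⟩ using 1
  · simp [T, EuclideanSpace.inner_eq_star_dotProduct, hnorm]
  · rfl

end Matrix

namespace SimpleGraph

variable {V : Type*} {G : SimpleGraph V}

theorem specRad_eq_sSup_eigenvalueSet [Fintype V] (G : SimpleGraph V) :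
    specRad G = sSup (G.adjMatrix ℝ).eigenvalueSet := rfl

theorem sum_card_filter_adj_div_card_le_specRad [Fintype V] (G : SimpleGraph V) {S : Finset V}
    (hS : S.Nonempty) : (∑ i ∈ S, (#{j ∈ S | G.Adj i j} : ℝ)) / #S ≤ specRad G := by
  set x : V → ℝ := fun v => if v ∈ S then 1 else 0
  have hx : x ≠ 0 := fun h => by
    obtain ⟨v, hv⟩ := hS
    simpa [x, hv] using congrFun h v
  have hxAx : x ⬝ᵥ G.adjMatrix ℝ *ᵥ x = ∑ i ∈ S, (#{j ∈ S | G.Adj i j} : ℝ) := by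
    simp [x, dotProduct, adjMatrix_mulVec_apply, sum_ite_mem, neighborFinset_eq_filter,
      filter_inter]
  have hxx : x ⬝ᵥ x = #S := by simp [x, dotProduct]
  rw [specRad_eq_sSup_eigenvalueSet, ← hxAx, ← hxx]
  exact (G.isHermitian_adjMatrix ℝ).rayleigh_le_sSup_eigenvalueSet hx

theorem sum_card_filter_adj_insert (S : Finset V) {u : V} (hu : u ∉ S) :
    ∑ i ∈ insert u S, #{j ∈ insert u S | G.Adj i j} =
      ∑ i ∈ S, #{j ∈ S | G.Adj i j} + 2 * #{j ∈ S | G.Adj u j} := by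
  have hrow : ∀ i ∈ S, #{j ∈ insert u S | G.Adj i j} =
      #{j ∈ S | G.Adj i j} + if G.Adj i u then 1 else 0 := by
    intro i _
    rw [filter_insert]
    split_ifs
    · exact card_insert_of_notMem fun hmem => hu (mem_filter.mp hmem).1
    · rfl
  have hcol : ∑ i ∈ S, (if G.Adj i u then 1 else 0) = #{j ∈ S | G.Adj u j} := by
    simp only [sum_boole, Nat.cast_id, adj_comm]
  rw [sum_insert hu, filter_insert, if_neg (G.irrefl (v := u)), sum_congr rfl hrow,
    sum_add_distrib, hcol]
  ring

theorem gsq_adj_of_walk {a c : V} (p : G.Walk a c) (hp : p.length ≤ 2) (hac : a ≠ c) :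
    (gsq G).Adj a c := by
  have hpos := Reachable.pos_dist_of_ne ⟨p⟩ hac
  have hle := dist_le p
  exact (fromRel_adj _ a c).mpr ⟨hac, Or.inl (by omega)⟩

theorem gsq_adj_of_adj {a b : V} (h : G.Adj a b) : (gsq G).Adj a b :=
  gsq_adj_of_walk h.toWalk (by simp) h.ne

theorem gsq_adj_of_adj_of_adj {a b c : V} (hab : G.Adj a b) (hbc : G.Adj b c) (hac : a ≠ c) :
    (gsq G).Adj a c :=
  gsq_adj_of_walk (.cons hab hbc.toWalk) (by simp) hac

theorem Walk.IsCycle.exists_injective_zmod {u : V} {c : G.Walk u u} (hc : c.IsCycle) :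
    ∃ f : ZMod c.length → V, Function.Injective f ∧ ∀ i, G.Adj (f i) (f (i + 1)) := by
  have h3 := hc.three_le_length
  have : NeZero c.length := ⟨by omega⟩
  refine ⟨fun i => c.getVert i.val, fun i j hij => ZMod.val_injective _ ?_, fun i => ?_⟩
  · have hi := ZMod.val_lt i
    have hj := ZMod.val_lt j
    exact hc.getVert_injOn' (by simp; omega) (by simp; omega) hij
  · have hi := ZMod.val_lt i
    have hsucc : c.getVert (i.val + 1) = c.getVert (i + 1).val := by
      rw [ZMod.val_add, ZMod.val_one'' (by omega)]
      rcases (show i.val + 1 < c.length ∨ i.val + 1 = c.length by omega) with hlt | heq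
      · rw [Nat.mod_eq_of_lt hlt]
      · rw [heq, Nat.mod_self, getVert_length, getVert_zero]
    simpa only [hsucc] using c.adj_getVert_succ hi

section CycleInSquare

variable {g : ℕ} {f : ZMod g → V}

theorem injOn_add_intCast_Icc (hg : 5 ≤ g) (hf : Function.Injective f) (i : ZMod g) :
    Set.InjOn (fun k : ℤ => f (i + k)) (Set.Icc (-2) 2) := by
  refine (hf.comp (add_right_injective i)).comp_injOn
    (ZMod.intCast_injOn_of_abs_sub_lt fun a ha b hb => ?_)
  rw [abs_lt]
  simp only [Set.mem_Icc] at ha hb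
  omega

variable [NeZero g] (hg : 5 ≤ g) (hf : Function.Injective f)
  (hadj : ∀ i, G.Adj (f i) (f (i + 1)))
include hg hf hadj

theorem four_le_card_filter_gsq_adj_of_cycle (i : ZMod g) :
    4 ≤ #{j ∈ univ.image f | (gsq G).Adj (f i) j} := by
  have hinj := injOn_add_intCast_Icc hg hf i
  have hne : ∀ k ∈ Set.Icc (-2 : ℤ) 2, k ≠ 0 → f i ≠ f (i + k) := fun k hk hk0 h =>
    hk0 (hinj hk (by norm_num) (by simpa using h.symm))
  have hN : #(({1, 2, -1, -2} : Finset ℤ).image fun k : ℤ => f (i + k)) = 4 := by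
    rw [card_image_of_injOn (hinj.mono fun k hk => by simp at hk; simp; omega)]
    rfl
  refine hN ▸ card_le_card fun j hj => ?_
  obtain ⟨k, hk, rfl⟩ := mem_image.mp hj
  refine mem_filter.mpr ⟨mem_image_of_mem _ (mem_univ _), ?_⟩
  simp only [mem_insert, mem_singleton] at hk
  rcases hk with rfl | rfl | rfl | rfl
  · simpa using gsq_adj_of_adj (hadj i)
  · have hne2 : f i ≠ f (i + 1 + 1) := by
      simpa [add_assoc, one_add_one_eq_two] using hne 2 (by norm_num) (by norm_num)
    simpa [add_assoc, one_add_one_eq_two] using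
      gsq_adj_of_adj_of_adj (hadj i) (hadj (i + 1)) hne2
  · simpa [sub_eq_add_neg] using (gsq_adj_of_adj (hadj (i - 1))).symm
  · have hne2 : f (i - 2) ≠ f (i - 2 + 1 + 1) := by
      simpa [add_assoc, one_add_one_eq_two, sub_eq_add_neg] using
        (hne (-2) (by norm_num) (by norm_num)).symm
    simpa [add_assoc, one_add_one_eq_two, sub_eq_add_neg] using
      (gsq_adj_of_adj_of_adj (hadj (i - 2)) (hadj (i - 2 + 1)) hne2).symm

theorem three_le_card_filter_gsq_adj_of_pendant {u : V} (hu : u ∉ Set.range f) {i₀ : ZMod g}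
    (hu₀ : G.Adj u (f i₀)) : 3 ≤ #{j ∈ univ.image f | (gsq G).Adj u j} := by
  have hne : ∀ i, u ≠ f i := fun i h => hu ⟨i, h.symm⟩
  have hN : #(({0, 1, -1} : Finset ℤ).image fun k : ℤ => f (i₀ + k)) = 3 := by
    rw [card_image_of_injOn ((injOn_add_intCast_Icc hg hf i₀).mono
      fun k hk => by simp at hk; simp; omega)]
    rfl
  refine hN ▸ card_le_card fun j hj => ?_
  obtain ⟨k, hk, rfl⟩ := mem_image.mp hj
  refine mem_filter.mpr ⟨mem_image_of_mem _ (mem_univ _), ?_⟩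
  simp only [mem_insert, mem_singleton] at hk
  rcases hk with rfl | rfl | rfl
  · simpa using gsq_adj_of_adj hu₀
  · simpa using gsq_adj_of_adj_of_adj hu₀ (hadj i₀) (hne _)
  · have h : G.Adj (f i₀) (f (i₀ - 1)) := by simpa using (hadj (i₀ - 1)).symm
    simpa [sub_eq_add_neg] using gsq_adj_of_adj_of_adj hu₀ h (hne _)

theorem four_lt_specRad_gsq_of_cycle_of_pendant [Fintype V] {u : V} (hu : u ∉ Set.range f)
    {i₀ : ZMod g} (hu₀ : G.Adj u (f i₀)) : 4 < specRad (gsq G) := by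
  set C := univ.image f
  have hC : #C = g := by rw [card_image_of_injective _ hf, card_univ, ZMod.card]
  have huC : u ∉ C := by simpa [C] using hu
  have hcycle : 4 * g ≤ ∑ i ∈ C, #{j ∈ C | (gsq G).Adj i j} := by
    rw [sum_image fun a _ b _ h => hf h]
    calc 4 * g = ∑ _i : ZMod g, 4 := by simp [ZMod.card, mul_comm]
      _ ≤ _ := sum_le_sum fun i _ => four_le_card_filter_gsq_adj_of_cycle hg hf hadj i
  have hpendant : 3 ≤ #{j ∈ C | (gsq G).Adj u j} :=
    three_le_card_filter_gsq_adj_of_pendant hg hf hadj hu hu₀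
  have hsum : (4 * g + 6 : ℝ) ≤ ∑ i ∈ insert u C, (#{j ∈ insert u C | (gsq G).Adj i j} : ℝ) := by
    rw [← Nat.cast_sum, sum_card_filter_adj_insert C huC]
    exact_mod_cast (by omega)
  have hρ := (gsq G).sum_card_filter_adj_div_card_le_specRad (insert_nonempty u C)
  rw [card_insert_of_notMem huC, hC, Nat.cast_add_one] at hρ
  calc (4 : ℝ) < (4 * g + 6) / (g + 1) := by rw [lt_div_iff₀ (by positivity)]; linarith
    _ ≤ _ := (div_le_div_of_nonneg_right hsum (by positivity)).trans hρ

end CycleInSquare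

end SimpleGraph

theorem specRad_sq_unicyclic_girth_gt_four_general {n : ℕ}
    (U : SimpleGraph (Fin n)) (hU : IsUnicyclic U)
    (hg5 : 5 ≤ U.girth) (hgn : U.girth ≤ n - 1) :
    4 < specRad (gsq U) := by
  have hcyclic : ¬ U.IsAcyclic := girth_eq_zero.not.mp (by omega)
  obtain ⟨v, c, hc, hgirth⟩ := exists_girth_eq_length.mpr hcyclic
  rw [hgirth] at hg5 hgn
  have : NeZero c.length := ⟨by omega⟩
  obtain ⟨f, hf, hadj⟩ := hc.exists_injective_zmod
  obtain ⟨w, hw⟩ : ∃ w, w ∉ Set.range f := by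
    by_contra! h
    have := Fintype.card_le_of_surjective f h
    simp only [Fintype.card_fin, ZMod.card] at this
    omega
  obtain ⟨d, -, hd, hd'⟩ := (hU.1.preconnected w (f 0)).some.exists_boundary_dart
    (Set.range f)ᶜ hw (by simp)
  obtain ⟨i₀, hi₀⟩ := not_not.mp hd'
  exact four_lt_specRad_gsq_of_cycle_of_pendant hg5 hf hadj hd (hi₀ ▸ d.adj)

/-- A unicyclic graph on `n ≥ 6` vertices with girth `g`,
`5 ≤ g ≤ n - 1`, has `ρ(U²) > 4`. -/
theorem specRad_sq_unicyclic_girth_gt_four {n : ℕ} (hn : 6 ≤ n)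
    (U : SimpleGraph (Fin n)) (hU : IsUnicyclic U)
    (hg5 : 5 ≤ U.girth) (hgn : U.girth ≤ n - 1) :
    4 < specRad (gsq U) :=
  specRad_sq_unicyclic_girth_gt_four_general U hU hg5 hgn
end
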